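/- arXiv:1810.06267 — 3 statements merged into one kernel-verified Lean document; each statement's English description precedes it below -/
import Mathlib

section
/- Let $M$ be a matroid, let $S = \{s_1, \dots, s_u\}$ be an independent set of $M$, and let $I_1, \dots, I_t$ be independent sets of $M$. Suppose there is a surjective function $f : \{1,\dots,u\} \to \{1,\dots,t\}$ such that $s_i$ lies in the span of $I_{f(i)}$ for every $i$. Then there exists an independent set $B$ of $M$ such that $B \cap I_j \neq \emptyset$ for every $j \in \{1,\dots,t\}$. -/
/-!
By surjectivity of `f`, every `I j` has a representative `s i ∈ closure (I j)`, and these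
representatives are distinct and independent. They are exchanged one at a time: if `C` is the
current independent set with the representative `x` of `I j` removed, then `x ∉ closure C`, so
`I j ⊄ closure C` and some `y ∈ I j` can take the place of `x`.
-/

open Set Function

namespace Matroid

variable {α ι : Type*} {M : Matroid α}

lemma Indep.exists_insert_indep_of_mem_closure {C J : Set α} {x : α} (hC : M.Indep C)
    (hxC : x ∉ M.closure C) (hxJ : x ∈ M.closure J) :
    ∃ y ∈ J, y ∉ M.closure C ∧ M.Indep (insert y C) := by
  have hJC : ¬ J ∩ M.E ⊆ M.closure C := fun h ↦
    hxC <| M.closure_subset_closure_of_subset_closure h (by rwa [closure_inter_ground])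
  obtain ⟨y, ⟨hyJ, hyE⟩, hyC⟩ := not_subset.mp hJC
  exact ⟨y, hyJ, hyC, ((hC.notMem_closure_iff hyE).mp hyC).1⟩

/-- The invariant of the exchange process: the representatives `s i` of the indices `i ∉ K` not
yet treated are kept, and `B` hits `J i` for the treated ones. -/
lemma exists_indep_union_image_compl_of_mem_closure {s : ι → α} (hs : Injective s)
    (hS : M.Indep (range s)) {J : ι → Set α} (hsJ : ∀ i, s i ∈ M.closure (J i)) (K : Finset ι) :
    ∃ B, Disjoint B (s '' (↑K)ᶜ) ∧ M.Indep (B ∪ s '' (↑K)ᶜ) ∧ ∀ i ∈ K, (B ∩ J i).Nonempty := by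
  classical
  induction K using Finset.induction_on with
  | empty => exact ⟨∅, by simp, by simpa using hS, by simp⟩
  | @insert j K hjK ih =>
    obtain ⟨B, hBX, hBX_indep, hBJ⟩ := ih
    set X := s '' (↑K)ᶜ
    have hjX : s j ∈ X := mem_image_of_mem s (by simpa using hjK)
    have hR : s '' (↑(insert j K))ᶜ = X \ {s j} := by
      rw [Finset.coe_insert, insert_eq, compl_union, ← sdiff_eq_compl_inter, image_sdiff hs,
        image_singleton]
    have hC : B ∪ X \ {s j} = (B ∪ X) \ {s j} := by
      rw [union_sdiff_distrib, sdiff_eq_left.mpr (disjoint_singleton_right.mpr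
        (hBX.notMem_of_mem_right hjX))]
    have hsjC : s j ∉ M.closure (B ∪ X \ {s j}) :=
      hC ▸ hBX_indep.notMem_closure_sdiff_of_mem (mem_union_right B hjX)
    obtain ⟨y, hyJ, hyC, hy_indep⟩ :=
      (hBX_indep.subset (hC ▸ sdiff_subset)).exists_insert_indep_of_mem_closure hsjC (hsJ j)
    have hyX : y ∉ X \ {s j} := fun h ↦ hyC (M.mem_closure_of_mem' (mem_union_right B h))
    refine ⟨insert y B, ?_, ?_, ?_⟩
    · rw [hR]
      exact disjoint_insert_left.mpr ⟨hyX, hBX.mono_right sdiff_subset⟩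
    · rwa [hR, insert_union]
    · intro i hi
      obtain rfl | hiK := Finset.mem_insert.mp hi
      · exact ⟨y, mem_insert y B, hyJ⟩
      · exact (hBJ i hiK).mono (inter_subset_inter_left _ (subset_insert y B))

lemma exists_indep_forall_inter_nonempty_of_mem_closure [Finite ι] {s : ι → α}
    (hs : Injective s) (hS : M.Indep (range s)) {J : ι → Set α}
    (hsJ : ∀ i, s i ∈ M.closure (J i)) : ∃ B, M.Indep B ∧ ∀ i, (B ∩ J i).Nonempty := by
  have := Fintype.ofFinite ι
  obtain ⟨B, -, hB, hBJ⟩ := exists_indep_union_image_compl_of_mem_closure hs hS hsJ Finset.univ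
  exact ⟨B, hB.subset subset_union_left, fun i ↦ hBJ i (Finset.mem_univ i)⟩

end Matroid

theorem exists_indep_transversal_general {α : Type*} (M : Matroid α) (u t : ℕ)
    (s : Fin u → α) (hs : Function.Injective s)
    (hS : M.Indep (Set.range s))
    (I : Fin t → Set α)
    (f : Fin u → Fin t) (hf : Function.Surjective f)
    (hspan : ∀ i, s i ∈ M.closure (I (f i))) :
    ∃ B : Set α, M.Indep B ∧ ∀ j, (B ∩ I j).Nonempty := by
  obtain ⟨B, hB, hBI⟩ := M.exists_indep_forall_inter_nonempty_of_mem_closure hs hS hspan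
  refine ⟨B, hB, fun j ↦ ?_⟩
  obtain ⟨i, rfl⟩ := hf j
  exact hBI i

theorem exists_indep_transversal {α : Type*} (M : Matroid α) (u t : ℕ)
    (s : Fin u → α) (hs : Function.Injective s)
    (hS : M.Indep (Set.range s))
    (I : Fin t → Set α) (hI : ∀ j, M.Indep (I j))
    (f : Fin u → Fin t) (hf : Function.Surjective f)
    (hspan : ∀ i, s i ∈ M.closure (I (f i))) :
    ∃ B : Set α, M.Indep B ∧ ∀ j, (B ∩ I j).Nonempty :=
  exists_indep_transversal_general M u t s hs hS I f hf hspan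
end

section
/- Let $(E,d)$ be a metric space, $\tau > 0$, and let $F \subseteq E$ be a finite set with $|F| \geq (m+1)z + 1$. Suppose there exist points $b_1, \dots, b_m \in E$ and a set $O \subseteq F$ with $|O| \leq z$ such that every $f \in F \setminus O$ satisfies $d(f, b_i) \leq \tau$ for some $i$. Then there exists $c \in F$ such that $|\{x \in F : d(c,x) \leq 2\tau\}| \geq z+1$. -/
/-!
Discard the outliers `O`: at least `m * z + 1` points of `F` remain, each within `τ` of one of
the `m` centres `b i`. By pigeonhole some centre has more than `z` of them within `τ`, and any one
of those points sees all the others within `2 * τ` by the triangle inequality.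
-/

open Finset

section PseudoMetricSpace

variable {α : Type*} [PseudoMetricSpace α]

theorem Finset.exists_lt_card_filter_dist_le_of_mul_lt_card {S B : Finset α} {τ : ℝ} {z : ℕ}
    (hcard : B.card * z < S.card) (hcover : ∀ s ∈ S, ∃ b ∈ B, dist s b ≤ τ) :
    ∃ b ∈ B, z < (S.filter fun x => dist x b ≤ τ).card := by
  classical
  by_contra! hsmall
  have hS : S ⊆ B.biUnion fun b => S.filter fun x => dist x b ≤ τ := by
    intro s hs
    obtain ⟨b, hb, hsb⟩ := hcover s hs
    exact mem_biUnion.mpr ⟨b, hb, mem_filter.mpr ⟨hs, hsb⟩⟩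
  have := (card_le_card hS).trans (card_biUnion_le_card_mul _ _ _ hsmall)
  omega

theorem Finset.exists_lt_card_filter_dist_le_two_mul {S B : Finset α} {τ : ℝ} {z : ℕ}
    (hcard : B.card * z < S.card) (hcover : ∀ s ∈ S, ∃ b ∈ B, dist s b ≤ τ) :
    ∃ c ∈ S, z < (S.filter fun x => dist c x ≤ 2 * τ).card := by
  obtain ⟨b, -, hb⟩ := exists_lt_card_filter_dist_le_of_mul_lt_card hcard hcover
  obtain ⟨c, hc⟩ := card_pos.mp (z.zero_le.trans_lt hb)
  have hcb : dist c b ≤ τ := (mem_filter.mp hc).2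
  refine ⟨c, (mem_filter.mp hc).1, hb.trans_le (card_le_card fun x hx => ?_)⟩
  obtain ⟨hxS, hxb⟩ := mem_filter.mp hx
  refine mem_filter.mpr ⟨hxS, ?_⟩
  calc dist c x ≤ dist c b + dist x b := dist_triangle_right c x b
    _ ≤ 2 * τ := by linarith

end PseudoMetricSpace

theorem exists_dense_ball_point_general {E : Type*} [MetricSpace E]
    (τ : ℝ) (m z : ℕ) (F : Finset E)
    (hF : (m + 1) * z + 1 ≤ F.card)
    (b : Fin m → E) (O : Finset E) (hO : O.card ≤ z)
    (hcover : ∀ f ∈ F, f ∉ O → ∃ i : Fin m, dist f (b i) ≤ τ) :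
    ∃ c ∈ F, z + 1 ≤ (F.filter (fun x => dist c x ≤ 2 * τ)).card := by
  classical
  have hcard : (univ.image b).card * z < (F \ O).card := by
    have hB : (univ.image b).card ≤ m := card_image_le.trans_eq (card_fin m)
    have hS : F.card - O.card ≤ (F \ O).card := le_card_sdiff O F
    have := Nat.mul_le_mul_right z hB
    rw [add_one_mul] at hF
    omega
  have hcoverS : ∀ s ∈ F \ O, ∃ c ∈ univ.image b, dist s c ≤ τ := fun s hs => by
    obtain ⟨hsF, hsO⟩ := mem_sdiff.mp hs
    obtain ⟨i, hi⟩ := hcover s hsF hsO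
    exact ⟨b i, mem_image_of_mem b (mem_univ i), hi⟩
  obtain ⟨c, hc, hdense⟩ := exists_lt_card_filter_dist_le_two_mul hcard hcoverS
  exact ⟨c, sdiff_subset hc,
    hdense.trans_le (card_le_card (filter_subset_filter _ sdiff_subset))⟩

theorem exists_dense_ball_point {E : Type*} [MetricSpace E] [DecidableEq E]
    (τ : ℝ) (hτ : 0 < τ) (m z : ℕ) (F : Finset E)
    (hF : (m + 1) * z + 1 ≤ F.card)
    (b : Fin m → E) (O : Finset E) (hOF : O ⊆ F) (hO : O.card ≤ z)
    (hcover : ∀ f ∈ F, f ∉ O → ∃ i : Fin m, dist f (b i) ≤ τ) :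
    ∃ c ∈ F, z + 1 ≤ (F.filter (fun x => dist c x ≤ 2 * τ)).card :=
  exists_dense_ball_point_general τ m z F hF b O hO hcover
end

section
/- Let $(E,d)$ be a metric space, $\tau > 0$, and let $C \subseteq E$ be finite with $d(c,c') > 2\tau$ for all distinct $c,c' \in C$. Suppose each $c \in C$ is assigned a set $A_c \subseteq \mathfrak{B}(c, 2\tau)$ with $|A_c| \geq z+1$, and suppose additionally that for distinct $c, c' \in C$ and any $e \in A_c$, $e' \in A_{c'}$ we have $d(e,e') > 2\tau$. If $S \subseteq E$ is a set of 'centers' such that the set of points at distance more than $\tau$ from $S$ has size at most $z$, then for each $c \in C$ there exists $x_c \in A_c$ with $d(x_c, S) \leq \tau$, and the assignment $c \mapsto$ (the nearest center of $S$ to $x_c$) is injective. -/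
open Finset

theorem exists_mem_dist_le_of_card_outliers_lt {E : Type*} [PseudoMetricSpace E] [Fintype E]
    {τ : ℝ} {S A : Finset E} [DecidablePred fun e : E => ∀ s ∈ S, τ < dist e s]
    (hA : #(univ.filter fun e : E => ∀ s ∈ S, τ < dist e s) < #A) :
    ∃ e ∈ A, ∃ s ∈ S, dist e s ≤ τ := by
  obtain ⟨e, heA, he⟩ := exists_mem_notMem_of_card_lt_card hA
  simp only [mem_filter, mem_univ, true_and, not_forall, not_lt, exists_prop] at he
  exact ⟨e, heA, he⟩

theorem Set.InjOn.of_dist_le_of_separated {ι E : Type*} [PseudoMetricSpace E] {s : Set ι}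
    {f g : ι → E} {τ : ℝ} (hsep : ∀ i ∈ s, ∀ j ∈ s, i ≠ j → 2 * τ < dist (f i) (f j))
    (hg : ∀ i ∈ s, dist (f i) (g i) ≤ τ) : Set.InjOn g s := by
  intro i hi j hj hgij
  by_contra hij
  have := calc
    dist (f i) (f j) ≤ dist (f i) (g i) + dist (g j) (f j) := by
      rw [hgij]; exact dist_triangle _ _ _
    _ ≤ 2 * τ := by rw [dist_comm (g j)]; linarith [hg i hi, hg j hj]
  exact (hsep i hi j hj hij).not_ge this

theorem support_points_served_injectively_general {E : Type*} [MetricSpace E] [Fintype E]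
    [DecidableEq E] (τ : ℝ) (z : ℕ) (C : Finset E)
    (A : E → Finset E)
    (hA : ∀ c ∈ C, (∀ x ∈ A c, dist c x ≤ 2 * τ) ∧ z + 1 ≤ (A c).card)
    (hcross : ∀ c ∈ C, ∀ c' ∈ C, c ≠ c' → ∀ e ∈ A c, ∀ e' ∈ A c', 2 * τ < dist e e')
    (S : Finset E)
    (houtliers : (Finset.univ.filter (fun e : E => ∀ s ∈ S, τ < dist e s)).card ≤ z) :
    ∃ x : E → E, (∀ c ∈ C, x c ∈ A c ∧ ∃ s ∈ S, dist (x c) s ≤ τ) ∧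
      ∀ g : E → E, (∀ c ∈ C, g c ∈ S ∧ dist (x c) (g c) ≤ τ) → Set.InjOn g ↑C := by
  have served : ∀ c ∈ C, ∃ e ∈ A c, ∃ s ∈ S, dist e s ≤ τ := fun c hc =>
    exists_mem_dist_le_of_card_outliers_lt (houtliers.trans_lt (hA c hc).2)
  choose! x hxA hxS using served
  refine ⟨x, fun c hc => ⟨hxA c hc, hxS c hc⟩, fun g hg => ?_⟩
  refine Set.InjOn.of_dist_le_of_separated (fun c hc c' hc' hne => ?_) fun c hc => (hg c hc).2
  exact hcross c hc c' hc' hne _ (hxA c hc) _ (hxA c' hc')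

theorem support_points_served_injectively {E : Type*} [MetricSpace E] [Fintype E]
    [DecidableEq E] (τ : ℝ) (hτ : 0 < τ) (z : ℕ) (C : Finset E)
    (hfar : ∀ c ∈ C, ∀ c' ∈ C, c ≠ c' → 2 * τ < dist c c')
    (A : E → Finset E)
    (hA : ∀ c ∈ C, (∀ x ∈ A c, dist c x ≤ 2 * τ) ∧ z + 1 ≤ (A c).card)
    (hcross : ∀ c ∈ C, ∀ c' ∈ C, c ≠ c' → ∀ e ∈ A c, ∀ e' ∈ A c', 2 * τ < dist e e')
    (S : Finset E) (hS : S.Nonempty)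
    (houtliers : (Finset.univ.filter (fun e : E => ∀ s ∈ S, τ < dist e s)).card ≤ z) :
    ∃ x : E → E, (∀ c ∈ C, x c ∈ A c ∧ ∃ s ∈ S, dist (x c) s ≤ τ) ∧
      ∀ g : E → E, (∀ c ∈ C, g c ∈ S ∧ dist (x c) (g c) ≤ τ) → Set.InjOn g ↑C :=
  support_points_served_injectively_general τ z C A hA hcross S houtliers
end
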